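/- arXiv:1808.02292 — 3 statements merged into one kernel-verified Lean document; each statement's English description precedes it below -/
import Mathlib

section
/- Let G be a compact topological group acting isometrically on metric spaces (P',d') and (P,d), and let φ : P' → P be an ε-G-equivariant Hausdorff approximation. Suppose there exists a section s' : P'/G → P' of the quotient map π' : P' → P'/G. Then the map φ̄ : P'/G → P/G defined by φ̄(x) := π(φ(s'(x))) is a 2ε-isometry between the quotient metric spaces (P'/G, d̄') and (P/G, d̄). -/
/-!
Compactness of `G` makes every orbit infimum `⨅ g, d(u, g • v)` a minimum. An `ε`-equivariant
`ε`-isometry distorts each `d(u, g • v)` by less than `2ε` (`ε` from the distortion of `φ`, `ε`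
from moving `g` across `φ`), and comparing the two minima at each other's minimisers gives the
distortion bound for `φ̄`. For density, if `v` is `ε`-close to `φ u'` and `s'` picks `g • u'`
from the orbit of `u'`, then `g⁻¹ • φ (g • u')` is `ε`-close to `φ u'`, hence `2ε`-close to `v`.
-/

open Set

theorem abs_ciInf_sub_ciInf_lt {ι : Type*} [TopologicalSpace ι] [CompactSpace ι] [Nonempty ι]
    {f f' : ι → ℝ} (hf : Continuous f) (hf' : Continuous f') {δ : ℝ}
    (h : ∀ i, |f i - f' i| < δ) : |iInf f - iInf f'| < δ := by
  obtain ⟨a, -, ha⟩ := isCompact_univ.exists_isMinOn univ_nonempty hf.continuousOn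
  obtain ⟨b, -, hb⟩ := isCompact_univ.exists_isMinOn univ_nonempty hf'.continuousOn
  have hfa : iInf f = f a :=
    ciInf_eq_of_forall_ge_of_forall_gt_exists_lt (fun i => ha (mem_univ i)) fun _ hw => ⟨a, hw⟩
  have hfb : iInf f' = f' b :=
    ciInf_eq_of_forall_ge_of_forall_gt_exists_lt (fun i => hb (mem_univ i)) fun _ hw => ⟨b, hw⟩
  have hab : f a ≤ f b := ha (mem_univ b)
  have hba : f' b ≤ f' a := hb (mem_univ a)
  rw [hfa, hfb, abs_sub_lt_iff]
  constructor <;> linarith [abs_sub_lt_iff.mp (h a), abs_sub_lt_iff.mp (h b)]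

section EquivariantApproximation

variable {G X Y : Type*} [Group G] [MulAction G X] [MulAction G Y] [PseudoMetricSpace Y]
  {φ : X → Y} {ε : ℝ}

theorem iInf_dist_smul_le (u v : Y) (g : G) : (⨅ h : G, dist u (h • v)) ≤ dist u (g • v) :=
  ciInf_le ⟨0, by rintro _ ⟨h, rfl⟩; exact dist_nonneg⟩ g

theorem abs_dist_smul_sub_dist_smul_lt [PseudoMetricSpace X]
    (hφ : ∀ u₀ u₁ : X, |dist u₀ u₁ - dist (φ u₀) (φ u₁)| < ε)
    (hφG : ∀ (u : X) (g : G), dist (φ (g • u)) (g • φ u) < ε) (u v : X) (g : G) :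
    |dist u (g • v) - dist (φ u) (g • φ v)| < 2 * ε := by
  have hmove : |dist (φ u) (φ (g • v)) - dist (φ u) (g • φ v)| < ε := by
    rw [dist_comm (φ u), dist_comm (φ u)]
    exact (abs_dist_sub_le _ _ _).trans_lt (hφG v g)
  calc |dist u (g • v) - dist (φ u) (g • φ v)|
      ≤ |dist u (g • v) - dist (φ u) (φ (g • v))|
        + |dist (φ u) (φ (g • v)) - dist (φ u) (g • φ v)| := abs_sub_le _ _ _
    _ < ε + ε := add_lt_add (hφ u (g • v)) hmove
    _ = 2 * ε := by ring

theorem dist_inv_smul_map_smul_lt (hiso : ∀ (g : G) (u v : Y), dist (g • u) (g • v) = dist u v)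
    (hφG : ∀ (u : X) (g : G), dist (φ (g • u)) (g • φ u) < ε) (u : X) (g : G) :
    dist (g⁻¹ • φ (g • u)) (φ u) < ε := by
  rw [← hiso g, smul_inv_smul]
  exact hφG u g

end EquivariantApproximation

theorem induced_map_on_quotients_is_two_eps_isometry_general
    {G P' P : Type*} [Group G] [TopologicalSpace G] [CompactSpace G]
    [MetricSpace P'] [MetricSpace P] [MulAction G P'] [MulAction G P]
    [ContinuousSMul G P'] [ContinuousSMul G P]
    (hiso : ∀ (g : G) (u v : P), dist (g • u) (g • v) = dist u v)
    (ε : ℝ) (φ : P' → P)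
    (hφ1 : ∀ u₀ u₁ : P', |dist u₀ u₁ - dist (φ u₀) (φ u₁)| < ε)
    (hφ2 : ∀ v : P, ∃ u' : P', dist v (φ u') < ε)
    (hφG : ∀ (u' : P') (γ : G), dist (φ (γ • u')) (γ • φ u') < ε)
    (s' : Quotient (MulAction.orbitRel G P') → P')
    (hs' : ∀ x, Quotient.mk (MulAction.orbitRel G P') (s' x) = x)
    (dbar' : P' → P' → ℝ) (hdbar' : ∀ u v, dbar' u v = ⨅ g : G, dist u (g • v))
    (dbar : P → P → ℝ) (hdbar : ∀ u v, dbar u v = ⨅ g : G, dist u (g • v)) :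
    (∀ x y, |dbar' (s' x) (s' y) - dbar (φ (s' x)) (φ (s' y))| < 2 * ε) ∧
    (∀ v : P, ∃ x, dbar v (φ (s' x)) < 2 * ε) := by
  refine ⟨fun x y => ?_, fun v => ?_⟩
  · rw [hdbar', hdbar]
    refine abs_ciInf_sub_ciInf_lt ?_ ?_ (abs_dist_smul_sub_dist_smul_lt hφ1 hφG (s' x) (s' y))
      <;> fun_prop
  · obtain ⟨u', hu'⟩ := hφ2 v
    obtain ⟨g, hg⟩ : s' ⟦u'⟧ ∈ MulAction.orbit G u' :=
      MulAction.orbitRel_apply.mp (Quotient.exact (hs' ⟦u'⟧))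
    refine ⟨⟦u'⟧, ?_⟩
    rw [hdbar, ← hg]
    calc ⨅ h : G, dist v (h • φ (g • u'))
        ≤ dist v (g⁻¹ • φ (g • u')) := iInf_dist_smul_le _ _ _
      _ ≤ dist v (φ u') + dist (g⁻¹ • φ (g • u')) (φ u') := dist_triangle_right _ _ _
      _ < ε + ε := add_lt_add hu' (dist_inv_smul_map_smul_lt hiso hφG u' g)
      _ = 2 * ε := by ring

/-- Let a compact topological group `G` act isometrically on metric spaces
`(P', d')` and `(P, d)`, and let `φ : P' → P` be an `ε`-`G`-equivariant Hausdorff approximation.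
Suppose `s' : P'/G → P'` is a section of the quotient map.  Then the induced map
`φ̄ : P'/G → P/G`, `φ̄(x) = π(φ(s'(x)))`, is a `2ε`-isometry between the quotient metric spaces:
its metric distortion is `< 2ε` and every point of `P/G` lies within `2ε` of its image.
(The quotient metrics are `d̄(ū₀, ū₁) = inf_{g} d(u₀, g • u₁)`.) -/
theorem induced_map_on_quotients_is_two_eps_isometry
    {G P' P : Type*} [Group G] [TopologicalSpace G] [CompactSpace G] [IsTopologicalGroup G]
    [MetricSpace P'] [MetricSpace P] [MulAction G P'] [MulAction G P]
    [ContinuousSMul G P'] [ContinuousSMul G P]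
    (hiso' : ∀ (g : G) (u v : P'), dist (g • u) (g • v) = dist u v)
    (hiso : ∀ (g : G) (u v : P), dist (g • u) (g • v) = dist u v)
    (ε : ℝ) (hε : 0 < ε) (φ : P' → P)
    (hφ1 : ∀ u₀ u₁ : P', |dist u₀ u₁ - dist (φ u₀) (φ u₁)| < ε)
    (hφ2 : ∀ v : P, ∃ u' : P', dist v (φ u') < ε)
    (hφG : ∀ (u' : P') (γ : G), dist (φ (γ • u')) (γ • φ u') < ε)
    (s' : Quotient (MulAction.orbitRel G P') → P')
    (hs' : ∀ x, Quotient.mk (MulAction.orbitRel G P') (s' x) = x)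
    (dbar' : P' → P' → ℝ) (hdbar' : ∀ u v, dbar' u v = ⨅ g : G, dist u (g • v))
    (dbar : P → P → ℝ) (hdbar : ∀ u v, dbar u v = ⨅ g : G, dist u (g • v)) :
    (∀ x y, |dbar' (s' x) (s' y) - dbar (φ (s' x)) (φ (s' y))| < 2 * ε) ∧
    (∀ v : P, ∃ x, dbar v (φ (s' x)) < 2 * ε) :=
  induced_map_on_quotients_is_two_eps_isometry_general hiso ε φ hφ1 hφ2 hφG s' hs' dbar' hdbar' dbar
    hdbar
end

section
/- In the setting of closed subspaces K_i ⊂ H_i compatible with the convergence structure (Φ_i(𝒞 ∩ K_∞) ⊂ K_i, Φ_i(𝒞 ∩ K_∞^⊥) ⊂ K_i^⊥, and 𝒞 = (𝒞 ∩ K_∞) ⊕ (𝒞 ∩ K_∞^⊥)), for a sequence u_i ∈ K_i: (1) u_i → u_∞ ∈ K_∞ strongly with respect to {Φ_i|_{𝒞∩K_∞}} if and only if u_i → u_∞ strongly with respect to {Φ_i}; (2) the analogous equivalence holds for weak convergence. -/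
open Filter Topology

/-!
By compatibility, projecting `ι c` onto `K_∞` and every `Φ_i c` onto `K_i` amounts to replacing
`c = c' + c''` by its component `c' ∈ 𝒞 ∩ K_∞`. Projections are `1`-Lipschitz, so if `Φ_i c_k`
approximates `v_i` then `Φ_i c'_k` approximates `π_{K_i} v_i`, and `ι c'_k → π_{K_∞} v_∞`. For
`u_i ∈ K_i` this gives the strong statement; for the weak one, test `u_i` against `π_{K_i} v_i`,
which has the same inner products with `u_i`.

The real `limsup` is `0` on sequences unbounded above, so a sequence far from every `Φ_i c`
converges strongly to every limit of approximants; the weak statement treats that case apart.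
-/

/-- Kuwae–Shioya strong convergence with respect to a convergence structure `(ι, Φ)`. -/
def KSStrongConv {CC Hinf : Type*} [AddCommGroup CC] [Module ℝ CC]
    [NormedAddCommGroup Hinf] [InnerProductSpace ℝ Hinf]
    {H : ℕ → Type*} [∀ i, NormedAddCommGroup (H i)] [∀ i, InnerProductSpace ℝ (H i)]
    (ι : CC →ₗ[ℝ] Hinf) (Φ : ∀ i, CC →ₗ[ℝ] H i)
    (u : ∀ i, H i) (uinf : Hinf) : Prop :=
  ∃ v : ℕ → CC, Tendsto (fun k => ι (v k)) atTop (𝓝 uinf) ∧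
    Tendsto (fun k => Filter.limsup (fun i => ‖Φ i (v k) - u i‖) atTop) atTop (𝓝 (0 : ℝ))

/-- Kuwae–Shioya weak convergence. -/
def KSWeakConv {CC Hinf : Type*} [AddCommGroup CC] [Module ℝ CC]
    [NormedAddCommGroup Hinf] [InnerProductSpace ℝ Hinf]
    {H : ℕ → Type*} [∀ i, NormedAddCommGroup (H i)] [∀ i, InnerProductSpace ℝ (H i)]
    (ι : CC →ₗ[ℝ] Hinf) (Φ : ∀ i, CC →ₗ[ℝ] H i)
    (u : ∀ i, H i) (uinf : Hinf) : Prop :=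
  ∀ (v : ∀ i, H i) (vinf : Hinf), KSStrongConv ι Φ v vinf →
    Tendsto (fun i => (inner ℝ (u i) (v i) : ℝ)) atTop (𝓝 (inner ℝ uinf vinf : ℝ))

theorem Filter.limsup_mem_Icc_of_le_of_le_add {α : Type*} {l : Filter α} [l.NeBot]
    {f g h : α → ℝ} (hg : 0 ≤ g) (hgf : g ≤ f) (hfg : f ≤ g + h)
    (hh : IsBoundedUnder (· ≤ ·) l h) :
    limsup g l ∈ Set.Icc 0 (limsup f l) := by
  by_cases hf : IsBoundedUnder (· ≤ ·) l f
  · have hgb : IsBoundedUnder (· ≤ ·) l g := hf.mono_le (Eventually.of_forall hgf)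
    exact ⟨le_limsup_of_frequently_le (Frequently.of_forall hg) hgb,
      limsup_le_limsup (Eventually.of_forall hgf)
        (isBoundedUnder_of ⟨0, hg⟩).isCoboundedUnder_le hf⟩
  · -- Both limsups then take the junk value `0` of `limsup` on unbounded real sequences.
    have hgb : ¬ IsBoundedUnder (· ≤ ·) l g := fun hgb =>
      hf ((isBoundedUnder_le_add hgb hh).mono_le (Eventually.of_forall hfg))
    simp [Real.limsup_of_not_isBoundedUnder, hf, hgb]

theorem limsup_norm_starProjection_mem_Icc {𝕜 α : Type*} [RCLike 𝕜] {l : Filter α} [l.NeBot]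
    {E : α → Type*} [∀ i, NormedAddCommGroup (E i)] [∀ i, InnerProductSpace 𝕜 (E i)]
    (K : ∀ i, Submodule 𝕜 (E i)) [∀ i, (K i).HasOrthogonalProjection] (x : ∀ i, E i)
    (hx : IsBoundedUnder (· ≤ ·) l fun i => ‖x i - (K i).starProjection (x i)‖) :
    limsup (fun i => ‖(K i).starProjection (x i)‖) l ∈ Set.Icc 0 (limsup (fun i => ‖x i‖) l) :=
  limsup_mem_Icc_of_le_of_le_add (fun _ => norm_nonneg _)
    (fun i => (K i).norm_starProjection_apply_le (x i)) (fun _ => norm_le_insert' _ _) hx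

theorem Submodule.inner_starProjection_right_of_mem {𝕜 E : Type*} [RCLike 𝕜]
    [NormedAddCommGroup E] [InnerProductSpace 𝕜 E] {K : Submodule 𝕜 E} [K.HasOrthogonalProjection]
    {a : E} (ha : a ∈ K) (x : E) : inner 𝕜 a (K.starProjection x) = inner 𝕜 a x := by
  rw [← inner_starProjection_left_eq_right, starProjection_eq_self_iff.mpr ha]

section ConvergenceStructure

variable {CC Hinf : Type*} [AddCommGroup CC] [Module ℝ CC]
  [NormedAddCommGroup Hinf] [InnerProductSpace ℝ Hinf]
  {H : ℕ → Type*} [∀ i, NormedAddCommGroup (H i)] [∀ i, InnerProductSpace ℝ (H i)]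
  {ι : CC →ₗ[ℝ] Hinf} {Φ : ∀ i, CC →ₗ[ℝ] H i}

theorem KSStrongConv.of_comp_subtype {p : Submodule ℝ CC} {v : ∀ i, H i} {vinf : Hinf}
    (hv : KSStrongConv (ι.comp p.subtype) (fun i => (Φ i).comp p.subtype) v vinf) :
    KSStrongConv ι Φ v vinf :=
  let ⟨c, hcι, hcΦ⟩ := hv
  ⟨fun k => c k, hcι, hcΦ⟩

theorem KSWeakConv.comp_subtype {p : Submodule ℝ CC} {u : ∀ i, H i} {uinf : Hinf}
    (hu : KSWeakConv ι Φ u uinf) :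
    KSWeakConv (ι.comp p.subtype) (fun i => (Φ i).comp p.subtype) u uinf :=
  fun v vinf hv => hu v vinf hv.of_comp_subtype

variable {K : ∀ i, Submodule ℝ (H i)} {Kinf : Submodule ℝ Hinf}

structure CompatibleSubspaces (ι : CC →ₗ[ℝ] Hinf) (Φ : ∀ i, CC →ₗ[ℝ] H i)
    (K : ∀ i, Submodule ℝ (H i)) (Kinf : Submodule ℝ Hinf) : Prop where
  split : ∀ c : CC, ∃ c' c'' : CC, ι c' ∈ Kinf ∧ ι c'' ∈ Kinfᗮ ∧ c = c' + c''
  map_mem : ∀ i (c : CC), ι c ∈ Kinf → Φ i c ∈ K i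
  map_mem_orthogonal : ∀ i (c : CC), ι c ∈ Kinfᗮ → Φ i c ∈ (K i)ᗮ

variable [∀ i, (K i).HasOrthogonalProjection] [Kinf.HasOrthogonalProjection]

theorem CompatibleSubspaces.exists_comap_starProjection
    (hK : CompatibleSubspaces ι Φ K Kinf) (c : CC) :
    ∃ c' : Kinf.comap ι, ι c' = Kinf.starProjection (ι c) ∧
      ∀ i, Φ i c' = (K i).starProjection (Φ i c) := by
  obtain ⟨c', c'', hc', hc'', rfl⟩ := hK.split c
  exact ⟨⟨c', hc'⟩, (Submodule.eq_starProjection_of_mem_orthogonal' hc' hc'' (map_add _ _ _)).symm,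
    fun i => (Submodule.eq_starProjection_of_mem_orthogonal' (hK.map_mem i c' hc')
      (hK.map_mem_orthogonal i c'' hc'') (map_add _ _ _)).symm⟩

theorem CompatibleSubspaces.exists_comap_tendsto_starProjection
    (hK : CompatibleSubspaces ι Φ K Kinf)
    {c : ℕ → CC} {w : Hinf} (hc : Tendsto (fun k => ι (c k)) atTop (𝓝 w)) :
    ∃ p : ℕ → Kinf.comap ι, Tendsto (fun k => ι (p k)) atTop (𝓝 (Kinf.starProjection w)) ∧
      ∀ k i, Φ i (p k) = (K i).starProjection (Φ i (c k)) := by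
  choose p hpι hpΦ using fun k => hK.exists_comap_starProjection (c k)
  refine ⟨p, ?_, hpΦ⟩
  simpa only [Function.comp_def, hpι] using (Kinf.starProjection.continuous.tendsto w).comp hc

theorem CompatibleSubspaces.isBoundedUnder_norm_sub_starProjection
    (hK : CompatibleSubspaces ι Φ K Kinf)
    (hΦnorm : ∀ c : CC, Tendsto (fun i => ‖Φ i c‖) atTop (𝓝 ‖ι c‖)) (c : CC) :
    IsBoundedUnder (· ≤ ·) atTop fun i => ‖Φ i c - (K i).starProjection (Φ i c)‖ := by
  obtain ⟨c', -, hc'Φ⟩ := hK.exists_comap_starProjection c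
  simpa only [← hc'Φ, ← map_sub] using (hΦnorm (c - c')).isBoundedUnder_le

theorem KSStrongConv.comap_starProjection
    (hK : CompatibleSubspaces ι Φ K Kinf)
    {v : ∀ i, H i} {vinf : Hinf} (hv : KSStrongConv ι Φ v vinf)
    (hbdd : ∀ c, IsBoundedUnder (· ≤ ·) atTop
      fun i => ‖(Φ i c - v i) - (K i).starProjection (Φ i c - v i)‖) :
    KSStrongConv (ι.comp (Kinf.comap ι).subtype) (fun i => (Φ i).comp (Kinf.comap ι).subtype)
      (fun i => (K i).starProjection (v i)) (Kinf.starProjection vinf) := by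
  obtain ⟨c, hcι, hcΦ⟩ := hv
  obtain ⟨p, hpι, hpΦ⟩ := hK.exists_comap_tendsto_starProjection hcι
  have hlimsup k : limsup (fun i => ‖Φ i (p k) - (K i).starProjection (v i)‖) atTop ∈
      Set.Icc 0 (limsup (fun i => ‖Φ i (c k) - v i‖) atTop) := by
    simpa only [map_sub, hpΦ] using limsup_norm_starProjection_mem_Icc K _ (hbdd (c k))
  exact ⟨p, hpι, tendsto_of_tendsto_of_tendsto_of_le_of_le tendsto_const_nhds hcΦ
    (fun k => (hlimsup k).1) (fun k => (hlimsup k).2)⟩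

theorem KSWeakConv.of_comp_subtype_comap
    (hK : CompatibleSubspaces ι Φ K Kinf)
    (hΦnorm : ∀ c : CC, Tendsto (fun i => ‖Φ i c‖) atTop (𝓝 ‖ι c‖))
    {u : ∀ i, H i} {uinf : Hinf} (hu : ∀ i, u i ∈ K i) (huinf : uinf ∈ Kinf)
    (hw : KSWeakConv (ι.comp (Kinf.comap ι).subtype)
      (fun i => (Φ i).comp (Kinf.comap ι).subtype) u uinf) :
    KSWeakConv ι Φ u uinf := by
  intro v vinf hv
  rw [← Submodule.inner_starProjection_right_of_mem huinf]
  by_cases hbdd : ∃ d, IsBoundedUnder (· ≤ ·) atTop fun i => ‖Φ i d - v i‖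
  · obtain ⟨d, hd⟩ := hbdd
    have hbdd' c : IsBoundedUnder (· ≤ ·) atTop
        fun i => ‖(Φ i c - v i) - (K i).starProjection (Φ i c - v i)‖ := by
      refine (isBoundedUnder_le_add (hΦnorm (c - d)).isBoundedUnder_le hd).mono_le
        (Eventually.of_forall fun i => ?_)
      calc ‖(Φ i c - v i) - (K i).starProjection (Φ i c - v i)‖
          = ‖(K i)ᗮ.starProjection (Φ i c - v i)‖ := by
            rw [Submodule.starProjection_orthogonal_val]
        _ ≤ ‖Φ i c - v i‖ := Submodule.norm_starProjection_apply_le _ _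
        _ = ‖Φ i (c - d) + (Φ i d - v i)‖ := by rw [map_sub, sub_add_sub_cancel]
        _ ≤ ‖Φ i (c - d)‖ + ‖Φ i d - v i‖ := norm_add_le _ _
    simpa only [Submodule.inner_starProjection_right_of_mem (hu _)] using
      hw _ _ (hv.comap_starProjection hK hbdd')
  · push Not at hbdd
    obtain ⟨c, hcι, -⟩ := hv
    obtain ⟨p, hpι, -⟩ := hK.exists_comap_tendsto_starProjection hcι
    -- Every limsup is the junk value `0`, so `v` converges to any limit of approximants.
    exact hw v _ ⟨p, hpι, by simp [Real.limsup_of_not_isBoundedUnder, hbdd]⟩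

end ConvergenceStructure

theorem subspace_convergence_iff_general
    {CC Hinf : Type*} [AddCommGroup CC] [Module ℝ CC]
    [NormedAddCommGroup Hinf] [InnerProductSpace ℝ Hinf]
    {H : ℕ → Type*} [∀ i, NormedAddCommGroup (H i)] [∀ i, InnerProductSpace ℝ (H i)]
    (ι : CC →ₗ[ℝ] Hinf)
    (Φ : ∀ i, CC →ₗ[ℝ] H i)
    (hΦnorm : ∀ c : CC, Tendsto (fun i => ‖Φ i c‖) atTop (𝓝 ‖ι c‖))
    (K : ∀ i, Submodule ℝ (H i)) (Kinf : Submodule ℝ Hinf)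
    [∀ i, CompleteSpace (K i)] [CompleteSpace Kinf]
    (hsplit : ∀ c : CC, ∃ c' c'' : CC, ι c' ∈ Kinf ∧ ι c'' ∈ Kinfᗮ ∧ c = c' + c'')
    (hΦK : ∀ i (c : CC), ι c ∈ Kinf → Φ i c ∈ K i)
    (hΦKperp : ∀ i (c : CC), ι c ∈ Kinfᗮ → Φ i c ∈ (K i)ᗮ)
    (u : ∀ i, H i) (hu : ∀ i, u i ∈ K i) (uinf : Hinf) (huinf : uinf ∈ Kinf) :
    (KSStrongConv (ι.comp (Submodule.comap ι Kinf).subtype)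
        (fun i => (Φ i).comp (Submodule.comap ι Kinf).subtype) u uinf ↔
      KSStrongConv ι Φ u uinf) ∧
    (KSWeakConv (ι.comp (Submodule.comap ι Kinf).subtype)
        (fun i => (Φ i).comp (Submodule.comap ι Kinf).subtype) u uinf ↔
      KSWeakConv ι Φ u uinf) := by
  have hK : CompatibleSubspaces ι Φ K Kinf := ⟨hsplit, hΦK, hΦKperp⟩
  refine ⟨⟨KSStrongConv.of_comp_subtype, fun hstrong => ?_⟩,
    ⟨KSWeakConv.of_comp_subtype_comap hK hΦnorm hu huinf,
      KSWeakConv.comp_subtype⟩⟩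
  have hPu : (fun i => (K i).starProjection (u i)) = u :=
    funext fun i => Submodule.starProjection_eq_self_iff.mpr (hu i)
  have hbdd c : IsBoundedUnder (· ≤ ·) atTop
      fun i => ‖(Φ i c - u i) - (K i).starProjection (Φ i c - u i)‖ := by
    simpa only [map_sub, Submodule.starProjection_eq_self_iff.mpr (hu _),
      sub_sub_sub_cancel_right] using
      hK.isBoundedUnder_norm_sub_starProjection hΦnorm c
  simpa only [hPu, Submodule.starProjection_eq_self_iff.mpr huinf] using
    hstrong.comap_starProjection hK hbdd

/-- In the setting of closed subspaces `K_i ⊂ H_i` compatible with the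
convergence structure (`Φ_i(𝒞 ∩ K_∞) ⊂ K_i`, `Φ_i(𝒞 ∩ K_∞^⊥) ⊂ K_i^⊥`,
`𝒞 = (𝒞 ∩ K_∞) ⊕ (𝒞 ∩ K_∞^⊥)`), for a sequence `u_i ∈ K_i` and `u_∞ ∈ K_∞`:
(1) `u_i → u_∞` strongly with respect to the restricted structure `{Φ_i|_{𝒞 ∩ K_∞}}` iff
`u_i → u_∞` strongly with respect to `{Φ_i}`; (2) the analogous equivalence holds for weak
convergence. -/
theorem subspace_convergence_iff
    {CC Hinf : Type*} [AddCommGroup CC] [Module ℝ CC]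
    [NormedAddCommGroup Hinf] [InnerProductSpace ℝ Hinf] [CompleteSpace Hinf]
    {H : ℕ → Type*} [∀ i, NormedAddCommGroup (H i)] [∀ i, InnerProductSpace ℝ (H i)]
    [∀ i, CompleteSpace (H i)]
    (ι : CC →ₗ[ℝ] Hinf) (hdense : Dense (Set.range ι))
    (Φ : ∀ i, CC →ₗ[ℝ] H i)
    (hΦnorm : ∀ c : CC, Tendsto (fun i => ‖Φ i c‖) atTop (𝓝 ‖ι c‖))
    (K : ∀ i, Submodule ℝ (H i)) (Kinf : Submodule ℝ Hinf)
    [∀ i, CompleteSpace (K i)] [CompleteSpace Kinf]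
    (hsplit : ∀ c : CC, ∃ c' c'' : CC, ι c' ∈ Kinf ∧ ι c'' ∈ Kinfᗮ ∧ c = c' + c'')
    (hΦK : ∀ i (c : CC), ι c ∈ Kinf → Φ i c ∈ K i)
    (hΦKperp : ∀ i (c : CC), ι c ∈ Kinfᗮ → Φ i c ∈ (K i)ᗮ)
    (u : ∀ i, H i) (hu : ∀ i, u i ∈ K i) (uinf : Hinf) (huinf : uinf ∈ Kinf) :
    (KSStrongConv (ι.comp (Submodule.comap ι Kinf).subtype)
        (fun i => (Φ i).comp (Submodule.comap ι Kinf).subtype) u uinf ↔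
      KSStrongConv ι Φ u uinf) ∧
    (KSWeakConv (ι.comp (Submodule.comap ι Kinf).subtype)
        (fun i => (Φ i).comp (Submodule.comap ι Kinf).subtype) u uinf ↔
      KSWeakConv ι Φ u uinf) :=
  subspace_convergence_iff_general ι Φ hΦnorm K Kinf hsplit hΦK hΦKperp u hu uinf huinf
end

section
/- Let (P',d'), (P,d) be metric spaces with isometric actions of a compact group G admitting Borel sections of the quotient maps, φ : P' → P a Borel ε-G-equivariant Hausdorff approximation, ν' a finite Borel measure on P', ν a Borel measure on P, and f : P/G → ℝ a compactly supported continuous function. Then for every ε' > 0 there exists δ > 0 depending only on ε' and f such that if ε ≤ δ then |∫_{P/G} f d(φ̄_* π'_*ν') − ∫_{P/G} f d(π_*ν)| ≤ ν'(P')·ε' + |∫_P (f∘π) d(φ_*ν') − ∫_P (f∘π) dν|, where φ̄ : P'/G → P/G is the induced map φ̄(x) = π(φ(s'(x))) for a Borel section s'. -/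
/-!
Since `G` is compact, the quotient map `π : P → P/G` is proper, so `f ∘ π` is continuous
with compact support, hence uniformly continuous; it is moreover `G`-invariant.  For
`u' ∈ P'` the section point `s'(π' u')` is some `γ • u'`, so the two integrands differ at `u'`
by `f(π(φ(γ • u'))) − f(π(γ • φ u'))`, which is small because `φ(γ • u')` and `γ • φ u'`
are `ε`-close.  Integrating this pointwise bound against the finite measure `ν'` and applying the
triangle inequality gives the estimate.
-/

open MeasureTheory

theorem MulAction.isProperMap_quotient_mk {G X : Type*} [Group G] [TopologicalSpace G]
    [ContinuousInv G] [CompactSpace G] [TopologicalSpace X] [MulAction G X] [ContinuousSMul G X] :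
    IsProperMap (Quotient.mk (MulAction.orbitRel G X)) := by
  refine isProperMap_iff_isClosedMap_and_compact_fibers.mpr
    ⟨continuous_quotient_mk', MulAction.isClosedMap_quotient, fun y => ?_⟩
  obtain ⟨x, rfl⟩ := Quotient.exists_rep y
  have hfiber : Quotient.mk (MulAction.orbitRel G X) ⁻¹' {Quotient.mk _ x} =
      MulAction.orbit G x := by
    ext z
    exact Quotient.eq.trans MulAction.orbitRel_apply
  rw [hfiber]
  exact isCompact_range (continuous_id.smul continuous_const)

theorem HasCompactSupport.comp_isProperMap {X Y M : Type*} [TopologicalSpace X]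
    [TopologicalSpace Y] [Zero M] {f : Y → M} {p : X → Y} (hf : HasCompactSupport f)
    (hp : IsProperMap p) : HasCompactSupport (f ∘ p) :=
  (hp.isCompact_preimage hf).of_isClosed_subset (isClosed_tsupport _)
    (tsupport_comp_subset_preimage f hp.continuous)

theorem HasCompactSupport.integrable_comp {X α : Type*} [TopologicalSpace X] [MeasurableSpace X]
    [OpensMeasurableSpace X] [MeasurableSpace α] {μ : Measure α} [IsFiniteMeasure μ]
    {g : X → ℝ} (hg : Continuous g) (hg_supp : HasCompactSupport g) {ψ : α → X}
    (hψ : Measurable ψ) : Integrable (g ∘ ψ) μ := by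
  obtain ⟨C, hC⟩ := hg_supp.exists_bound_of_continuous hg
  exact Integrable.of_bound (hg.measurable.comp hψ).aestronglyMeasurable C
    (ae_of_all _ fun _ => hC _)

theorem abs_integral_sub_integral_le_of_abs_sub_le {α : Type*} [MeasurableSpace α]
    {μ : Measure α} [IsFiniteMeasure μ] {f g : α → ℝ} {C : ℝ} (hf : Integrable f μ)
    (hg : Integrable g μ) (hfg : ∀ x, |f x - g x| ≤ C) :
    |(∫ x, f x ∂μ) - ∫ x, g x ∂μ| ≤ μ.real Set.univ * C := by
  rw [← integral_sub hf hg, mul_comm]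
  exact norm_integral_le_of_norm_le_const
    (ae_of_all _ fun x => (Real.norm_eq_abs _).trans_le (hfg x))

theorem dist_comp_smul_lt_of_almost_equivariant {G P' P β : Type*} [SMul G P'] [SMul G P]
    [PseudoMetricSpace P] [PseudoMetricSpace β] {g : P → β} {φ : P' → P} {δ η : ℝ}
    (hg_inv : ∀ (γ : G) v, g (γ • v) = g v)
    (hg : ∀ a b, dist a b < δ → dist (g a) (g b) < η)
    (hφ : ∀ (u : P') (γ : G), dist (φ (γ • u)) (γ • φ u) < δ) (u : P') (γ : G) :
    dist (g (φ (γ • u))) (g (φ u)) < η := by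
  simpa only [hg_inv] using hg _ _ (hφ u γ)

theorem induced_quotient_measure_estimate_general
    {G P' P : Type*} [Group G] [TopologicalSpace G] [IsTopologicalGroup G] [CompactSpace G]
    [MetricSpace P'] [MetricSpace P]
    [MeasurableSpace P'] [MeasurableSpace P] [BorelSpace P]
    [MulAction G P'] [MulAction G P] [ContinuousSMul G P]
    (f : Quotient (MulAction.orbitRel G P) → ℝ)
    (hf : Continuous f) (hfsupp : HasCompactSupport f) :
    ∀ ε' : ℝ, 0 < ε' → ∃ δ : ℝ, 0 < δ ∧
      ∀ ε : ℝ, 0 < ε → ε ≤ δ →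
      ∀ (φ : P' → P) (s' : Quotient (MulAction.orbitRel G P') → P')
        (ν' : Measure P') (ν : Measure P),
        IsFiniteMeasure ν' →
        Measurable φ →
        (∀ u₀ u₁ : P', |dist u₀ u₁ - dist (φ u₀) (φ u₁)| < ε) →
        (∀ v : P, ∃ u' : P', dist v (φ u') < ε) →
        (∀ (u' : P') (γ : G), dist (φ (γ • u')) (γ • φ u') < ε) →
        Measurable s' →
        (∀ x, Quotient.mk (MulAction.orbitRel G P') (s' x) = x) →
        |(∫ u', f (Quotient.mk (MulAction.orbitRel G P)
              (φ (s' (Quotient.mk (MulAction.orbitRel G P') u')))) ∂ν') -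
            ∫ v, f (Quotient.mk (MulAction.orbitRel G P) v) ∂ν| ≤
          (ν' Set.univ).toReal * ε' +
          |(∫ u', f (Quotient.mk (MulAction.orbitRel G P) (φ u')) ∂ν') -
            ∫ v, f (Quotient.mk (MulAction.orbitRel G P) v) ∂ν| := by
  intro ε' hε'
  set g : P → ℝ := f ∘ Quotient.mk (MulAction.orbitRel G P)
  have hg : Continuous g := hf.comp continuous_quotient_mk'
  have hg_supp : HasCompactSupport g := hfsupp.comp_isProperMap MulAction.isProperMap_quotient_mk
  have hg_inv : ∀ (γ : G) v, g (γ • v) = g v := fun γ v =>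
    congrArg f (Quotient.sound (MulAction.mem_orbit v γ))
  obtain ⟨δ, hδ, hgδ⟩ :=
    Metric.uniformContinuous_iff.mp (hg_supp.uniformContinuous_of_continuous hg) ε' hε'
  refine ⟨δ, hδ, fun ε _ hεδ φ s' ν' ν _ hφ _ _ hφ_equiv hs' hs'_section => ?_⟩
  have hpointwise : ∀ u', |g (φ (s' (Quotient.mk _ u'))) - g (φ u')| ≤ ε' := fun u' => by
    obtain ⟨γ, hγ⟩ :=
      MulAction.orbitRel_apply.mp (Quotient.exact (hs'_section (Quotient.mk _ u')))
    rw [← hγ, ← Real.dist_eq]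
    exact (dist_comp_smul_lt_of_almost_equivariant hg_inv hgδ
      (fun u γ => (hφ_equiv u γ).trans_le hεδ) u' γ).le
  have hsection := abs_integral_sub_integral_le_of_abs_sub_le
    (μ := ν') (hg_supp.integrable_comp hg (hφ.comp (hs'.comp measurable_quotient_mk'')))
    (hg_supp.integrable_comp hg hφ) hpointwise
  exact (abs_sub_le _ _ _).trans (add_le_add_left hsection _)

/-- Let metric spaces `P'`, `P` carry isometric actions of a compact group
`G`, let `φ : P' → P` be a Borel `ε`-`G`-equivariant Hausdorff approximation, `ν'` a finite
Borel measure on `P'`, `ν` a Borel measure on `P`, and `f : P/G → ℝ` compactly supported and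
continuous.  Then for every `ε' > 0` there is `δ > 0` depending only on `ε'` and `f` such that
for `ε ≤ δ`,
`|∫ f d(φ̄_* π'_* ν') − ∫ f d(π_* ν)| ≤ ν'(P') ε' + |∫ (f∘π) d(φ_* ν') − ∫ (f∘π) dν|`,
where `φ̄(x) = π(φ(s'(x)))` for a Borel section `s'` of `π' : P' → P'/G`.  (The pushforward
integrals are written as integrals over `P'` and `P`.) -/
theorem induced_quotient_measure_estimate
    {G P' P : Type*} [Group G] [TopologicalSpace G] [IsTopologicalGroup G] [CompactSpace G]
    [MetricSpace P'] [MetricSpace P]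
    [MeasurableSpace P'] [BorelSpace P'] [MeasurableSpace P] [BorelSpace P]
    [MulAction G P'] [MulAction G P] [ContinuousSMul G P'] [ContinuousSMul G P]
    (hiso' : ∀ (g : G) (u v : P'), dist (g • u) (g • v) = dist u v)
    (hiso : ∀ (g : G) (u v : P), dist (g • u) (g • v) = dist u v)
    (f : Quotient (MulAction.orbitRel G P) → ℝ)
    (hf : Continuous f) (hfsupp : HasCompactSupport f) :
    ∀ ε' : ℝ, 0 < ε' → ∃ δ : ℝ, 0 < δ ∧
      ∀ ε : ℝ, 0 < ε → ε ≤ δ →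
      ∀ (φ : P' → P) (s' : Quotient (MulAction.orbitRel G P') → P')
        (ν' : Measure P') (ν : Measure P),
        IsFiniteMeasure ν' →
        Measurable φ →
        (∀ u₀ u₁ : P', |dist u₀ u₁ - dist (φ u₀) (φ u₁)| < ε) →
        (∀ v : P, ∃ u' : P', dist v (φ u') < ε) →
        (∀ (u' : P') (γ : G), dist (φ (γ • u')) (γ • φ u') < ε) →
        Measurable s' →
        (∀ x, Quotient.mk (MulAction.orbitRel G P') (s' x) = x) →
        |(∫ u', f (Quotient.mk (MulAction.orbitRel G P)
              (φ (s' (Quotient.mk (MulAction.orbitRel G P') u')))) ∂ν') -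
            ∫ v, f (Quotient.mk (MulAction.orbitRel G P) v) ∂ν| ≤
          (ν' Set.univ).toReal * ε' +
          |(∫ u', f (Quotient.mk (MulAction.orbitRel G P) (φ u')) ∂ν') -
            ∫ v, f (Quotient.mk (MulAction.orbitRel G P) v) ∂ν| :=
  induced_quotient_measure_estimate_general f hf hfsupp
end
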